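/- For every ε > 0, the function ω ↦ Sep(ω,S,ε) is 𝓕-measurable on Ω. -/

import Mathlib

/-!
`Sep(ω) ≥ n` iff `ω` lies in the projection to `Ω` of the product-measurable set of
`(ω, x₁, …, xₙ)` with all `xᵢ ∈ 𝓔_ω` and pairwise `d^ω_S`-distance `> ε`; as these sets are
nested in `n`, measurability of `Sep` reduces to measurability of those projections, while
finiteness of `Sep(ω)` comes from compactness of the image of `𝓔_ω` under `x ↦ (φ_s(ω, x))_s`.

The projections are measurable by the measurable projection theorem for the complete measure
`ℙ`. A product-measurable set is the preimage of a measurable subset `D` of `ℕ^ℕ × X` under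
`q × id` for some measurable `q : Ω → ℕ^ℕ`, so its projection is `q⁻¹(π(D))`. The set `π(D)` is
analytic, hence null-measurable for the finite measure `q_* ℙ`: by Choquet's capacitability
argument, a continuous image `f(ℕ^ℕ)` is exhausted in measure by compact images of boxes
`∏ [0, mᵢ]`.
-/

open MeasureTheory Filter Set Topology
open scoped ENNReal

section Capacitability

def prefixBox (m : ℕ → ℕ) (k : ℕ) : Set (ℕ → ℕ) := {x | ∀ i < k, x i ≤ m i}

lemma prefixBox_zero (m : ℕ → ℕ) : prefixBox m 0 = univ := by
  simp [prefixBox]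

lemma prefixBox_eq_iUnion_update (m : ℕ → ℕ) (k : ℕ) :
    prefixBox m k = ⋃ j, prefixBox (Function.update m k j) (k + 1) := by
  ext x
  simp only [prefixBox, mem_iUnion, Nat.lt_succ_iff_lt_or_eq]
  constructor
  · intro hx
    refine ⟨x k, fun i hi => ?_⟩
    rcases hi with hi | rfl
    · simpa [hi.ne] using hx i hi
    · simp
  · rintro ⟨j, hj⟩ i hi
    simpa [hi.ne] using hj i (Or.inl hi)

lemma monotone_prefixBox_update (m : ℕ → ℕ) (k : ℕ) :
    Monotone fun j => prefixBox (Function.update m k j) (k + 1) := by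
  intro j j' hj x hx i hi
  by_cases h : i = k
  · subst h
    simpa using (by simpa using hx i hi : x i ≤ j).trans hj
  · simpa [h] using hx i hi

lemma antitone_prefixBox (m : ℕ → ℕ) : Antitone (prefixBox m) :=
  fun _ _ hk _ hx i hi => hx i (hi.trans_le hk)

lemma prefixBox_congr {m m' : ℕ → ℕ} {k : ℕ} (h : ∀ i < k, m i = m' i) :
    prefixBox m k = prefixBox m' k := by
  ext x
  exact forall₂_congr fun i hi => by rw [h i hi]

lemma isCompact_pi_Iic (m : ℕ → ℕ) : IsCompact (univ.pi fun i => Iic (m i)) :=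
  isCompact_univ_pi fun _ => (finite_Iic _).isCompact

lemma exists_forall_lt_measure_image_prefixBox {Y : Type*} [MeasurableSpace Y] (μ : Measure Y)
    (f : (ℕ → ℕ) → Y) {c : ℝ≥0∞} (hc : c < μ (range f)) :
    ∃ m : ℕ → ℕ, ∀ k, c < μ (f '' prefixBox m k) := by
  have step (k : ℕ) (m : ℕ → ℕ) (hm : c < μ (f '' prefixBox m k)) :
      ∃ j, c < μ (f '' prefixBox (Function.update m k j) (k + 1)) := by
    rwa [prefixBox_eq_iUnion_update, image_iUnion, Directed.measure_iUnion, lt_iSup_iff] at hm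
    exact Monotone.directed_le fun j j' h => image_mono (monotone_prefixBox_update m k h)
  choose! next hnext using step
  let w : ℕ → ℕ → ℕ := fun k => Nat.rec (fun _ => 0) (fun k m => Function.update m k (next k m)) k
  have hw (k : ℕ) : c < μ (f '' prefixBox (w k) k) := by
    induction k with
    | zero => simpa [prefixBox_zero] using hc
    | succ k ih => exact hnext k (w k) ih
  have hagree (k : ℕ) : ∀ i < k, w (i + 1) i = w k i := by
    induction k with
    | zero => intro i hi; omega
    | succ k ih =>
      intro i hi
      rcases Nat.lt_succ_iff_lt_or_eq.1 hi with hi | rfl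
      · rw [ih i hi]; exact (Function.update_of_ne hi.ne _ _).symm
      · rfl
  exact ⟨fun i => w (i + 1) i, fun k => prefixBox_congr (hagree k) ▸ hw k⟩

variable {Y : Type*} [TopologicalSpace Y]

lemma iInter_closure_image_prefixBox_subset [FirstCountableTopology Y] [T2Space Y]
    {f : (ℕ → ℕ) → Y} (hf : Continuous f) (m : ℕ → ℕ) :
    ⋂ k, closure (f '' prefixBox m k) ⊆ f '' univ.pi fun i => Iic (m i) := by
  intro y hy
  obtain ⟨U, hU⟩ := (𝓝 y).exists_antitone_basis
  have hx (k : ℕ) : ∃ x ∈ prefixBox m k, f x ∈ U k := by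
    obtain ⟨_, hyU, x, hx, rfl⟩ := mem_closure_iff_nhds.1 (mem_iInter.1 hy k) (U k) (hU.mem k)
    exact ⟨x, hx, hyU⟩
  choose x hxm hxU using hx
  -- clamping `x k` into the compact box changes only its coordinates `≥ k`
  let clamp : (ℕ → ℕ) → ℕ → ℕ := fun z i => min (z i) (m i)
  obtain ⟨a, ha, ψ, hψ, hlim⟩ := (isCompact_pi_Iic m).tendsto_subseq (x := fun k => clamp (x k))
    fun k i _ => min_le_right (x k i) (m i)
  have hxψ : Tendsto (x ∘ ψ) atTop (𝓝 a) := by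
    refine tendsto_pi_nhds.2 fun i => ((continuous_apply i).tendsto a |>.comp hlim).congr' ?_
    filter_upwards [eventually_gt_atTop i] with k hk
    exact min_eq_left (hxm (ψ k) i (hk.trans_le (hψ.id_le k)))
  refine ⟨a, ha, tendsto_nhds_unique ((hf.tendsto a).comp hxψ) ?_⟩
  exact (hU.tendsto hxU).comp hψ.tendsto_atTop

variable [MeasurableSpace Y]

lemma exists_isCompact_subset_range_le_measure [FirstCountableTopology Y] [T2Space Y]
    [OpensMeasurableSpace Y] (μ : Measure Y) [IsFiniteMeasure μ] {f : (ℕ → ℕ) → Y}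
    (hf : Continuous f) {c : ℝ≥0∞} (hc : c < μ (range f)) :
    ∃ K, IsCompact K ∧ K ⊆ range f ∧ c ≤ μ K := by
  obtain ⟨m, hm⟩ := exists_forall_lt_measure_image_prefixBox μ f hc
  refine ⟨_, (isCompact_pi_Iic m).image hf, image_subset_range _ _,
    le_trans ?_ (measure_mono (iInter_closure_image_prefixBox_subset hf m))⟩
  rw [Antitone.measure_iInter (fun k k' h => closure_mono (image_mono (antitone_prefixBox m h)))
    (fun k => isClosed_closure.nullMeasurableSet) ⟨0, measure_ne_top μ _⟩]
  exact le_iInf fun k => (hm k).le.trans (measure_mono subset_closure)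

theorem MeasureTheory.AnalyticSet.nullMeasurableSet [PolishSpace Y] [BorelSpace Y]
    (μ : Measure Y) [IsFiniteMeasure μ] {A : Set Y} (hA : AnalyticSet A) :
    NullMeasurableSet A μ := by
  rw [AnalyticSet_def] at hA
  rcases hA with rfl | ⟨f, hf, rfl⟩
  · exact nullMeasurableSet_empty
  rcases eq_zero_or_pos (μ (range f)) with h0 | hpos
  · exact NullMeasurableSet.of_null h0
  obtain ⟨u, -, hu, hlim⟩ := exists_seq_strictMono_tendsto' hpos
  choose K hK hKf hKμ using fun n => exists_isCompact_subset_range_le_measure μ hf (hu n).2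
  have hB : MeasurableSet (⋃ n, K n) := .iUnion fun n => (hK n).isClosed.measurableSet
  have hle : μ (range f) ≤ μ (⋃ n, K n) :=
    le_of_tendsto' hlim fun n => (hKμ n).trans (measure_mono (subset_iUnion K n))
  exact hB.nullMeasurableSet.congr <| ae_eq_of_subset_of_measure_ge (iUnion_subset hKf) hle
    hB.nullMeasurableSet (measure_ne_top μ _)

end Capacitability

section Factorization

variable {Ω Z : Type*} [MeasurableSpace Ω] [MeasurableSpace Z]

def FactorsThroughBaire (E : Set (Ω × Z)) : Prop :=
  ∃ q : Ω → ℕ → ℕ, Measurable q ∧ ∃ D : Set ((ℕ → ℕ) × Z), MeasurableSet D ∧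
    E = Prod.map q id ⁻¹' D

lemma factorsThroughBaire_empty : FactorsThroughBaire (∅ : Set (Ω × Z)) :=
  ⟨0, measurable_const, ∅, .empty, rfl⟩

lemma FactorsThroughBaire.compl {E : Set (Ω × Z)} (h : FactorsThroughBaire E) :
    FactorsThroughBaire Eᶜ := by
  obtain ⟨q, hq, D, hD, rfl⟩ := h
  exact ⟨q, hq, Dᶜ, hD.compl, rfl⟩

/-- Countably many factorizations merge into one by interleaving their coordinates. -/
lemma FactorsThroughBaire.iUnion {E : ℕ → Set (Ω × Z)} (h : ∀ n, FactorsThroughBaire (E n)) :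
    FactorsThroughBaire (⋃ n, E n) := by
  choose q hq D hD hE using h
  let r (n : ℕ) : (ℕ → ℕ) → ℕ → ℕ := fun z j => z (Nat.pair n j)
  have hr (n : ℕ) : Measurable (r n) := measurable_pi_lambda _ fun j => measurable_pi_apply _
  refine ⟨fun ω k => q k.unpair.1 ω k.unpair.2,
    measurable_pi_lambda _ fun k => (measurable_pi_apply _).comp (hq _),
    ⋃ n, Prod.map (r n) id ⁻¹' D n,
    .iUnion fun n => (((hr n).comp measurable_fst).prodMk measurable_snd) (hD n), ?_⟩
  ext ⟨ω, z⟩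
  simp [hE, r]

lemma factorsThroughBaire_of_measurableSet {E : Set (Ω × Z)} (hE : MeasurableSet E) :
    FactorsThroughBaire E := by
  let m : MeasurableSpace (Ω × Z) :=
    { MeasurableSet' := FactorsThroughBaire
      measurableSet_empty := factorsThroughBaire_empty
      measurableSet_compl := fun _ => .compl
      measurableSet_iUnion := fun _ => .iUnion }
  suffices h : Prod.instMeasurableSpace ≤ m from h E hE
  refine sup_le ?_ ?_ <;> rintro _ ⟨A, hA, rfl⟩
  · classical
    refine ⟨fun ω _ => if ω ∈ A then 1 else 0,
      measurable_pi_lambda _ fun _ => Measurable.ite hA measurable_const measurable_const,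
      {p | p.1 0 = 1}, ((measurable_pi_apply 0).comp measurable_fst) (measurableSet_singleton 1),
      ?_⟩
    ext p
    by_cases hp : p.1 ∈ A <;> simp [hp]
  · exact ⟨0, measurable_const, Prod.snd ⁻¹' A, measurable_snd hA, rfl⟩

end Factorization

theorem MeasurableSet.image_fst_of_isComplete {Ω Z : Type*} [MeasurableSpace Ω]
    [TopologicalSpace Z] [PolishSpace Z] [MeasurableSpace Z] [BorelSpace Z]
    (μ : Measure Ω) [IsFiniteMeasure μ] [μ.IsComplete] {E : Set (Ω × Z)} (hE : MeasurableSet E) :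
    MeasurableSet (Prod.fst '' E) := by
  obtain ⟨q, hq, D, hD, rfl⟩ := factorsThroughBaire_of_measurableSet hE
  have hproj : Prod.fst '' (Prod.map q id ⁻¹' D) = q ⁻¹' (Prod.fst '' D) := by
    ext ω
    simp
  rw [hproj]
  exact ((hD.analyticSet.image_of_continuous continuous_fst).nullMeasurableSet
    (μ.map q)).preimage (hq.quasiMeasurePreserving μ) |>.measurable_of_complete

lemma Nat.lt_sSup_iff_add_one_mem {T : Set ℕ} (hT : IsLowerSet T) (hbdd : BddAbove T) {n : ℕ} :
    n < sSup T ↔ n + 1 ∈ T := by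
  refine ⟨fun h => hT h (Nat.sSup_mem ?_ hbdd), fun h => le_csSup hbdd h⟩
  by_contra hempty
  rw [not_nonempty_iff_eq_empty.1 hempty, csSup_empty] at h
  exact n.not_lt_zero h

lemma measurable_sSup_of_isLowerSet {Ω : Type*} [MeasurableSpace Ω] {T : Ω → Set ℕ}
    (hlow : ∀ ω, IsLowerSet (T ω)) (hbdd : ∀ ω, BddAbove (T ω))
    (hmeas : ∀ n, MeasurableSet {ω | n ∈ T ω}) : Measurable fun ω => sSup (T ω) := by
  refine measurable_of_Ioi fun n => ?_
  simpa only [preimage, mem_Ioi, Nat.lt_sSup_iff_add_one_mem (hlow _) (hbdd _)] using hmeas (n + 1)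

lemma dist_pi_eq_sup' {ι : Type*} [Fintype ι] [Nonempty ι] {X : Type*} [PseudoMetricSpace X]
    (f g : ι → X) : dist f g = Finset.univ.sup' Finset.univ_nonempty fun i => dist (f i) (g i) :=
  le_antisymm
    (dist_pi_le_iff'.2 fun i => Finset.le_sup' (fun i => dist (f i) (g i)) (Finset.mem_univ i))
    (Finset.sup'_le _ _ fun i _ => dist_le_pi_dist f g i)

section Separated

variable {X Y : Type*} [PseudoMetricSpace Y] {K : Set X} {Φ : X → Y} {ε : ℝ}

/-- `Sep(ω, S, ε) = sSup (separatedCards 𝓔_ω (fun x s => φ_s (ω, x)) ε)`, since `d^ω_S` is the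
pullback of the sup metric on `S → X`. -/
def separatedCards (K : Set X) (Φ : X → Y) (ε : ℝ) : Set ℕ :=
  {n | ∃ E ⊆ K, E.Finite ∧ (∀ x ∈ E, ∀ y ∈ E, x ≠ y → ε < dist (Φ x) (Φ y)) ∧ E.ncard = n}

lemma mem_separatedCards_iff (hε : 0 ≤ ε) {n : ℕ} :
    n ∈ separatedCards K Φ ε ↔
      ∃ x : Fin n → X, (∀ i, x i ∈ K) ∧ Pairwise fun i j => ε < dist (Φ (x i)) (Φ (x j)) := by
  constructor
  · rintro ⟨E, hEK, hEfin, hsep, rfl⟩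
    have := hEfin.to_subtype
    let e : Fin E.ncard ≃ E := (Finite.equivFin E).symm
    refine ⟨fun i => e i, fun i => hEK (e i).2, fun i j hij => hsep _ (e i).2 _ (e j).2 ?_⟩
    exact fun h => hij (e.injective (Subtype.ext h))
  · rintro ⟨x, hxK, hsep⟩
    have hinj : Function.Injective x := fun i j hij => by
      by_contra hne
      simpa [hij] using (hsep hne).trans_le' hε
    refine ⟨range x, range_subset_iff.2 hxK, finite_range x, ?_, ?_⟩
    · rintro _ ⟨i, rfl⟩ _ ⟨j, rfl⟩ hij
      exact hsep fun h => hij (congrArg x h)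
    · rw [ncard_range_of_injective hinj, Nat.card_fin]

lemma isLowerSet_separatedCards : IsLowerSet (separatedCards K Φ ε) := by
  rintro _ k hkn ⟨E, hEK, hEfin, hsep, rfl⟩
  obtain ⟨E', hE'E, rfl⟩ := exists_subset_card_eq hkn
  exact ⟨E', hE'E.trans hEK, hEfin.subset hE'E,
    fun x hx y hy => hsep x (hE'E hx) y (hE'E hy), rfl⟩

/-- Two points of a separated set never share a center of an `ε / 2`-net. -/
lemma bddAbove_separatedCards (hε : 0 < ε) (hK : TotallyBounded (Φ '' K)) :
    BddAbove (separatedCards K Φ ε) := by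
  obtain ⟨t, htf, hcov⟩ := Metric.totallyBounded_iff.1 hK (ε / 2) (half_pos hε)
  have hnet (x : X) : ∃ c, x ∈ K → c ∈ t ∧ dist (Φ x) c < ε / 2 := by
    by_cases hx : x ∈ K
    · obtain ⟨c, hct, hc⟩ : ∃ c ∈ t, dist (Φ x) c < ε / 2 := by
        simpa using hcov (mem_image_of_mem Φ hx)
      exact ⟨c, fun _ => ⟨hct, hc⟩⟩
    · exact ⟨Φ x, fun h => absurd h hx⟩
  choose c hc using hnet
  refine ⟨t.ncard, ?_⟩
  rintro _ ⟨E, hEK, -, hsep, rfl⟩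
  refine ncard_le_ncard_of_injOn c (fun x hx => (hc x (hEK hx)).1) (fun x hx y hy hxy => ?_) htf
  by_contra hne
  refine (hsep x hx y hy hne).not_gt ?_
  calc dist (Φ x) (Φ y) ≤ dist (Φ x) (c x) + dist (Φ y) (c y) := by
        rw [hxy]; exact dist_triangle_right _ _ _
    _ < ε / 2 + ε / 2 := add_lt_add (hc x (hEK hx)).2 (hc y (hEK hy)).2
    _ = ε := add_halves ε

end Separated

lemma measurableSet_setOf_mem_separatedCards {Ω X Y : Type*} [MeasurableSpace Ω]
    (μ : Measure Ω) [IsFiniteMeasure μ] [μ.IsComplete]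
    [TopologicalSpace X] [PolishSpace X] [MeasurableSpace X] [BorelSpace X]
    [PseudoMetricSpace Y] [SecondCountableTopology Y] [MeasurableSpace Y] [OpensMeasurableSpace Y]
    {𝓔 : Set (Ω × X)} (h𝓔 : MeasurableSet 𝓔) {Φ : Ω × X → Y} (hΦ : Measurable Φ)
    {ε : ℝ} (hε : 0 ≤ ε) (n : ℕ) :
    MeasurableSet {ω | n ∈ separatedCards {x | (ω, x) ∈ 𝓔} (fun x => Φ (ω, x)) ε} := by
  have hpt (i : Fin n) : Measurable fun p : Ω × (Fin n → X) => (p.1, p.2 i) :=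
    measurable_fst.prodMk ((measurable_pi_apply i).comp measurable_snd)
  have hB : MeasurableSet {p : Ω × (Fin n → X) | (∀ i, (p.1, p.2 i) ∈ 𝓔) ∧
      Pairwise fun i j => ε < dist (Φ (p.1, p.2 i)) (Φ (p.1, p.2 j))} := by
    have hsep (i j : Fin n) : Measurable fun p : Ω × (Fin n → X) =>
        ε < dist (Φ (p.1, p.2 i)) (Φ (p.1, p.2 j)) :=
      measurableSet_setOfPred.1 <|
        measurableSet_lt measurable_const ((hΦ.comp (hpt i)).dist (hΦ.comp (hpt j)))
    exact measurableSet_setOfPred.2 <|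
      (Measurable.forall fun i => measurableSet_setOfPred.1 (hpt i h𝓔)).and
        (.forall fun i => .forall fun j => measurable_const.imp (hsep i j))
  convert MeasurableSet.image_fst_of_isComplete μ hB using 1
  ext ω
  simp [mem_separatedCards_iff hε]

theorem sep_count_measurable_general {Ω : Type*} [MeasurableSpace Ω]
    (ℙ : Measure Ω) [IsProbabilityMeasure ℙ] [ℙ.IsComplete]
    {X : Type*} [MetricSpace X] [CompleteSpace X] [SecondCountableTopology X]
    [MeasurableSpace X] [BorelSpace X]
    (𝓔 : Set (Ω × X)) (h𝓔 : MeasurableSet 𝓔)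
    (hcpt : ∀ ω : Ω, IsCompact {x : X | (ω, x) ∈ 𝓔})
    {ι : Type*} [Fintype ι] [Nonempty ι]
    (φ : ι → Ω × X → X) (hφ : ∀ s, Measurable (φ s))
    (hcont : ∀ (s : ι) (ω : Ω), ContinuousOn (fun x => φ s (ω, x)) {x : X | (ω, x) ∈ 𝓔})
    (ε : ℝ) (hε : 0 < ε) :
    Measurable (fun ω : Ω =>
      sSup {n : ℕ | ∃ E : Set X, E ⊆ {x : X | (ω, x) ∈ 𝓔} ∧ E.Finite ∧
        (∀ x ∈ E, ∀ y ∈ E, x ≠ y →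
          ε < Finset.univ.sup' Finset.univ_nonempty
            (fun s => dist (φ s (ω, x)) (φ s (ω, y)))) ∧
        E.ncard = n}) := by
  simp only [← dist_pi_eq_sup']
  refine measurable_sSup_of_isLowerSet (fun ω => isLowerSet_separatedCards)
    (fun ω => bddAbove_separatedCards hε ?_)
    (measurableSet_setOf_mem_separatedCards ℙ h𝓔 (Φ := fun p s => φ s p)
      (measurable_pi_lambda _ hφ) hε.le)
  exact ((hcpt ω).image_of_continuousOn (continuousOn_pi.2 fun s => hcont s ω)).totallyBounded

/-- With `𝓕` complete with respect to `ℙ`, `X` Polish, `𝓔 ∈ 𝓕 ⊗ 𝓑` with nonempty compact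
fibers `𝓔_ω`, and `φ_s` measurable and fiberwise continuous, the maximal cardinality
`Sep(ω,S,ε)` of an `(ω,S,ε)`-separated subset of `𝓔_ω` is measurable in `ω`. -/
theorem sep_count_measurable {Ω : Type*} [MeasurableSpace Ω]
    (ℙ : Measure Ω) [IsProbabilityMeasure ℙ] [ℙ.IsComplete]
    {X : Type*} [MetricSpace X] [CompleteSpace X] [SecondCountableTopology X]
    [MeasurableSpace X] [BorelSpace X]
    (𝓔 : Set (Ω × X)) (h𝓔 : MeasurableSet 𝓔)
    (hne : ∀ ω : Ω, {x : X | (ω, x) ∈ 𝓔}.Nonempty)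
    (hcpt : ∀ ω : Ω, IsCompact {x : X | (ω, x) ∈ 𝓔})
    {ι : Type*} [Fintype ι] [Nonempty ι]
    (φ : ι → Ω × X → X) (hφ : ∀ s, Measurable (φ s))
    (hcont : ∀ (s : ι) (ω : Ω), ContinuousOn (fun x => φ s (ω, x)) {x : X | (ω, x) ∈ 𝓔})
    (ε : ℝ) (hε : 0 < ε) :
    Measurable (fun ω : Ω =>
      sSup {n : ℕ | ∃ E : Set X, E ⊆ {x : X | (ω, x) ∈ 𝓔} ∧ E.Finite ∧
        (∀ x ∈ E, ∀ y ∈ E, x ≠ y →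
          ε < Finset.univ.sup' Finset.univ_nonempty
            (fun s => dist (φ s (ω, x)) (φ s (ω, y)))) ∧
        E.ncard = n}) :=
  sep_count_measurable_general ℙ 𝓔 h𝓔 hcpt φ hφ hcont ε hε
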